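/- For every w with 0 < w < v there exists a constant C_w > 0 such that for all integers κ ≥ 0, r ≥ 1, K ≥ 1, k ≥ 1 and s with s ≥ κ + r, writing S := Σ_{i=s}^{s+K−1} (U_{i+k} − U_i), one has E[ |E[S² | 𝓕_κ] − E[S²]| ] ≤ C_w K² r^{−w}. -/

import Mathlib

open MeasureTheory ProbabilityTheory Filter Finset
open scoped ProbabilityTheory ENNReal NNReal BigOperators

namespace DepNoise

variable {Ω : Type*} [MeasureSpace Ω]

/-- Variance of `U 0`. -/
noncomputable def varU (U : ℕ → Ω → ℝ) : ℝ :=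
  (∫ ω, (U 0 ω) ^ 2) - (∫ ω, U 0 ω) ^ 2

/-- Autocovariance `γ(h) = Cov(U 0, U h)`. -/
noncomputable def gammaCov (U : ℕ → Ω → ℝ) (h : ℕ) : ℝ :=
  (∫ ω, U 0 ω * U h ω) - (∫ ω, U 0 ω) * (∫ ω, U h ω)

/-- The σ-algebra `σ(U 0, …, U k)`. -/
def pastSigma (U : ℕ → Ω → ℝ) (k : ℕ) : MeasurableSpace Ω :=
  ⨆ i : Fin (k + 1), MeasurableSpace.comap (U i) inferInstance

/-- The σ-algebra `σ(U m, U (m+1), …)`. -/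
def futureSigma (U : ℕ → Ω → ℝ) (m : ℕ) : MeasurableSpace Ω :=
  ⨆ i : ℕ, MeasurableSpace.comap (U (m + i)) inferInstance

/-! Truncate every `U i` at level `M = r ^ ((v - w) / 2)` and let `T` be the block sum of the
truncated variables. `T²` is bounded by `4 K² M²` and measurable with respect to
`σ(U j : j ≥ κ + r)`, so the covariance inequality for strongly mixing σ-algebras (testing
against the indicator of `{E[·|·] ≥ mean}` twice, once on each side) bounds the `L¹` deviation
of `E[T² | 𝓕_κ]` from its mean by `16 K² M² C r^(-v) = 16 C K² r^(-w)`.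
Replacing `S²` by `T²` costs at most `2 E|S² - T²|`; writing `S² - T² = (S - T)(S + T)`, the
weighted AM-GM inequality with weight `M ^ q` and `|x - truncate M x| ≤ |x| ^ (q + 1) / M ^ q`
bound this by `K² M^(-q)` times moments of order `2q + 2`, which is `O(K² r^(-w))` once
`q (v - w) / 2 ≥ w`. -/

section Mixing

variable {α : Type*} {m n m₀ : MeasurableSpace α} {μ : Measure α}

lemma exists_integral_abs_condExp_sub_eq [IsProbabilityMeasure μ] (hm : m ≤ m₀) {f : α → ℝ}
    (hf : Integrable f μ) :
    ∃ A, MeasurableSet[m] A ∧ ∫ x, |μ[f|m] x - ∫ y, f y ∂μ| ∂μ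
      = 2 * (∫ x in A, f x ∂μ - μ.real A * ∫ y, f y ∂μ) := by
  set c := ∫ y, f y ∂μ
  set A := {x | c ≤ μ[f|m] x}
  have hA : MeasurableSet[m] A :=
    measurableSet_le measurable_const stronglyMeasurable_condExp.measurable
  have hD : Integrable (fun x => μ[f|m] x - c) μ := integrable_condExp.sub (integrable_const c)
  have habs : (fun x => |μ[f|m] x - c|)
      = fun x => 2 * A.indicator (fun x => μ[f|m] x - c) x - (μ[f|m] x - c) := by
    funext x
    by_cases hx : c ≤ μ[f|m] x
    · simp only [abs_of_nonneg (sub_nonneg.mpr hx), Set.mem_ofPred_eq, hx, Set.indicator_of_mem, A]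
      ring
    · simp [A, hx, abs_of_neg (sub_neg.mpr (not_le.mp hx))]
  refine ⟨A, hA, ?_⟩
  rw [habs, integral_sub ((hD.indicator (hm _ hA)).const_mul 2) hD, integral_const_mul,
    integral_indicator (hm _ hA), integral_sub integrable_condExp.integrableOn
    (integrable_const c).integrableOn, setIntegral_condExp hm hf hA, setIntegral_const,
    integral_sub integrable_condExp (integrable_const c), integral_condExp hm, integral_const]
  simp only [smul_eq_mul, probReal_univ, one_mul]
  ring

lemma integral_condExp_mul_of_bound [IsFiniteMeasure μ] (hn : n ≤ m₀) {f g : α → ℝ}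
    (hf : Integrable f μ) (hg : StronglyMeasurable[n] g) {B : ℝ} (hgB : ∀ x, |g x| ≤ B) :
    ∫ x, μ[f|n] x * g x ∂μ = ∫ x, f x * g x ∂μ := by
  have hpull : μ[g * f|n] =ᵐ[μ] g * μ[f|n] :=
    condExp_stronglyMeasurable_mul_of_bound hn hg hf B (ae_of_all _ hgB)
  calc ∫ x, μ[f|n] x * g x ∂μ = ∫ x, μ[g * f|n] x ∂μ := by
        rw [integral_congr_ae hpull]; simp only [Pi.mul_apply, mul_comm]
    _ = ∫ x, f x * g x ∂μ := by rw [integral_condExp hn]; simp only [Pi.mul_apply, mul_comm]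

lemma setIntegral_sub_le_mul_integral_abs_condExp [IsProbabilityMeasure μ] (hn : n ≤ m₀)
    {g : α → ℝ} (hg : StronglyMeasurable[n] g) {B : ℝ} (hgB : ∀ x, |g x| ≤ B) {A : Set α}
    (hA : MeasurableSet A) :
    ∫ x in A, g x ∂μ - μ.real A * ∫ x, g x ∂μ
      ≤ B * ∫ x, |μ[A.indicator 1|n] x - μ.real A| ∂μ := by
  have hgm : AEStronglyMeasurable g μ := (hg.mono hn).aestronglyMeasurable
  have hgi : Integrable g μ := (integrable_const B).mono' hgm (ae_of_all _ hgB)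
  have h1 : Integrable (A.indicator (1 : α → ℝ)) μ := (integrable_const 1).indicator hA
  have hcov : ∫ x in A, g x ∂μ - μ.real A * ∫ x, g x ∂μ
      = ∫ x, (μ[A.indicator 1|n] x - μ.real A) * g x ∂μ := by
    simp_rw [sub_mul]
    rw [integral_sub (integrable_condExp.mul_bdd hgm (ae_of_all _ hgB)) (hgi.const_mul _),
      integral_condExp_mul_of_bound hn h1 hg hgB,
      integral_const_mul, ← integral_indicator hA]
    simp only [← Set.indicator_mul_left, Pi.one_apply, one_mul]
  rw [hcov, ← integral_const_mul]
  refine integral_mono ((integrable_condExp.sub (integrable_const _)).mul_bdd hgm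
    (ae_of_all _ hgB)) ((integrable_condExp.sub (integrable_const _)).abs.const_mul B) fun x => ?_
  calc (μ[A.indicator 1|n] x - μ.real A) * g x ≤ |μ[A.indicator 1|n] x - μ.real A| * |g x| := by
        rw [← abs_mul]; exact le_abs_self _
    _ ≤ B * |μ[A.indicator 1|n] x - μ.real A| := by
        rw [mul_comm]; exact mul_le_mul_of_nonneg_right (hgB x) (abs_nonneg _)

theorem integral_abs_condExp_sub_le_of_mixing [IsProbabilityMeasure μ] (hm : m ≤ m₀) (hn : n ≤ m₀)
    {a : ℝ}    (hmix : ∀ A B, MeasurableSet[m] A → MeasurableSet[n] B →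
      |(μ (A ∩ B)).toReal - (μ A).toReal * (μ B).toReal| ≤ a)
    {g : α → ℝ} (hg : StronglyMeasurable[n] g) {B : ℝ} (hgB : ∀ x, |g x| ≤ B) :
    ∫ x, |μ[g|m] x - ∫ y, g y ∂μ| ∂μ ≤ 4 * B * a := by
  have hB : 0 ≤ B := (abs_nonneg _).trans (hgB (nonempty_of_isProbabilityMeasure μ).some)
  have hgi : Integrable g μ :=
    (integrable_const B).mono' (hg.mono hn).aestronglyMeasurable (ae_of_all _ hgB)
  obtain ⟨A, hA, hgA⟩ := exists_integral_abs_condExp_sub_eq hm hgi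
  have h1 : Integrable (A.indicator (1 : α → ℝ)) μ := (integrable_const 1).indicator (hm _ hA)
  obtain ⟨A', hA', hAA'⟩ := exists_integral_abs_condExp_sub_eq hn h1
  simp only [integral_indicator_one (hm _ hA), measureReal_restrict_apply (hm _ hA)] at hAA'
  have hcov : μ.real (A ∩ A') - μ.real A' * μ.real A ≤ a := by
    rw [mul_comm]; exact (le_abs_self _).trans (hmix A A' hA hA')
  calc ∫ x, |μ[g|m] x - ∫ y, g y ∂μ| ∂μ
      = 2 * (∫ x in A, g x ∂μ - μ.real A * ∫ y, g y ∂μ) := hgA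
    _ ≤ 2 * (B * ∫ x, |μ[A.indicator 1|n] x - μ.real A| ∂μ) := by
        gcongr; exact setIntegral_sub_le_mul_integral_abs_condExp hn hg hgB (hm _ hA)
    _ ≤ 4 * B * a := by rw [hAA']; nlinarith

lemma integral_abs_condExp_sub_le_add [IsProbabilityMeasure μ] {f g : α → ℝ}
    (hf : Integrable f μ) (hg : Integrable g μ) :
    ∫ x, |μ[f|m] x - ∫ y, f y ∂μ| ∂μ
      ≤ ∫ x, |μ[g|m] x - ∫ y, g y ∂μ| ∂μ + 2 * ∫ x, |f x - g x| ∂μ := by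
  have hsplit : ∀ᵐ x ∂μ, |μ[f|m] x - ∫ y, f y ∂μ|
      ≤ |μ[f - g|m] x| + |μ[g|m] x - ∫ y, g y ∂μ| + |∫ y, f y ∂μ - ∫ y, g y ∂μ| := by
    filter_upwards [condExp_sub hf hg m] with x hx
    rw [hx, Pi.sub_apply]
    calc _ = |(μ[f|m] x - μ[g|m] x) + (μ[g|m] x - ∫ y, g y ∂μ)
          - (∫ y, f y ∂μ - ∫ y, g y ∂μ)| := by ring_nf
      _ ≤ _ := (abs_sub _ _).trans (add_le_add_left (abs_add_le _ _) _)
  have hint : Integrable (fun x => |μ[g|m] x - ∫ y, g y ∂μ|) μ :=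
    (integrable_condExp.sub (integrable_const _)).abs
  have hmean : |∫ y, f y ∂μ - ∫ y, g y ∂μ| ≤ ∫ x, |f x - g x| ∂μ :=
    integral_sub hf hg ▸ abs_integral_le_integral_abs
  calc ∫ x, |μ[f|m] x - ∫ y, f y ∂μ| ∂μ
      ≤ ∫ x, (|μ[f - g|m] x| + |μ[g|m] x - ∫ y, g y ∂μ| + |∫ y, f y ∂μ - ∫ y, g y ∂μ|) ∂μ :=
        integral_mono_ae ((integrable_condExp.sub (integrable_const _)).abs)
          ((integrable_condExp.abs.add hint).add (integrable_const _)) hsplit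
    _ = ∫ x, |μ[f - g|m] x| ∂μ + ∫ x, |μ[g|m] x - ∫ y, g y ∂μ| ∂μ
          + |∫ y, f y ∂μ - ∫ y, g y ∂μ| := by
        rw [integral_add, integral_add integrable_condExp.abs hint, integral_const, probReal_univ,
          one_smul]
        exacts [integrable_condExp.abs.add hint, integrable_const _]
    _ ≤ ∫ x, |f x - g x| ∂μ + ∫ x, |μ[g|m] x - ∫ y, g y ∂μ| ∂μ + ∫ x, |f x - g x| ∂μ :=
        add_le_add (add_le_add_left (integral_abs_condExp_le _) _) hmean
    _ = _ := by ring

end Mixing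

section Truncation

def truncate (M x : ℝ) : ℝ := max (-M) (min M x)

variable {M : ℝ}

lemma measurable_truncate : Measurable (truncate M) :=
  measurable_const.max (measurable_const.min measurable_id)

lemma abs_truncate_le (hM : 0 ≤ M) (x : ℝ) : |truncate M x| ≤ M :=
  abs_le.mpr ⟨le_max_left _ _, max_le (by linarith) (min_le_left _ _)⟩

lemma truncate_eq_self {x : ℝ} (hx : |x| ≤ M) : truncate M x = x := by
  rw [truncate, min_eq_right (abs_le.mp hx).2, max_eq_right (abs_le.mp hx).1]

lemma abs_truncate_le_abs (hM : 0 ≤ M) (x : ℝ) : |truncate M x| ≤ |x| := by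
  rcases le_total x (-M) with h | h
  · rw [truncate, min_eq_right (by linarith), max_eq_left h, abs_of_nonpos (by linarith),
      abs_of_nonpos (by linarith)]
    linarith
  rcases le_total x M with h' | h'
  · rw [truncate_eq_self (abs_le.mpr ⟨h, h'⟩)]
  · rw [truncate, min_eq_left h', max_eq_right (by linarith), abs_of_nonneg hM,
      abs_of_nonneg (by linarith)]
    exact h'

lemma sq_add_truncate_le (hM : 0 ≤ M) (x : ℝ) : (x + truncate M x) ^ 2 ≤ 4 * x ^ 2 := by
  calc (x + truncate M x) ^ 2 = |x + truncate M x| ^ 2 := (sq_abs _).symm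
    _ ≤ (|x| + |x|) ^ 2 :=
        pow_le_pow_left₀ (abs_nonneg _) ((abs_add_le _ _).trans (by
          linarith [abs_truncate_le_abs hM x])) 2
    _ = 4 * x ^ 2 := by rw [← two_mul, mul_pow, sq_abs]; norm_num

lemma abs_sub_truncate_le (hM : 0 ≤ M) (x : ℝ) : |x - truncate M x| ≤ |x| := by
  have := le_abs_self x
  have := neg_abs_le x
  rw [abs_le]
  rcases le_total x (-M) with h | h
  · rw [truncate, min_eq_right (by linarith), max_eq_left h]; constructor <;> linarith
  rcases le_total x M with h' | h'
  · rw [truncate_eq_self (abs_le.mpr ⟨h, h'⟩)]; constructor <;> linarith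
  · rw [truncate, min_eq_left h', max_eq_right (by linarith)]; constructor <;> linarith

lemma sq_sub_truncate_le (hM : 0 < M) (q : ℕ) (x : ℝ) :
    (x - truncate M x) ^ 2 ≤ |x| ^ (2 * q + 2) / (M ^ q) ^ 2 := by
  rcases le_or_gt |x| M with hx | hx
  · rw [truncate_eq_self hx, sub_self, zero_pow two_ne_zero]; positivity
  rw [le_div_iff₀ (by positivity)]
  calc (x - truncate M x) ^ 2 * (M ^ q) ^ 2 = |x - truncate M x| ^ 2 * (M ^ q) ^ 2 := by
        rw [sq_abs]
    _ ≤ |x| ^ 2 * (|x| ^ q) ^ 2 := by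
        have := abs_sub_truncate_le hM.le x
        gcongr
    _ = |x| ^ (2 * q + 2) := by ring

end Truncation

lemma abs_mul_le_of_sq_le {a b α β L : ℝ} (hL : 0 < L) (ha : a ^ 2 ≤ α / L ^ 2)
    (hb : b ^ 2 ≤ β) : |a * b| ≤ (α + β) / (2 * L) := by
  rw [le_div_iff₀ (by positivity), abs_mul]
  rw [le_div_iff₀ (by positivity)] at ha
  nlinarith [sq_nonneg (L * |a| - |b|), sq_abs a, sq_abs b]

section IncrementSum

def incrementSum (k s K : ℕ) (x : ℕ → ℝ) : ℝ := ∑ i ∈ Ico s (s + K), (x (i + k) - x i)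

variable {k s K : ℕ}

lemma incrementSum_sub (x y : ℕ → ℝ) :
    incrementSum k s K (x - y) = incrementSum k s K x - incrementSum k s K y := by
  simp only [incrementSum, Pi.sub_apply, ← sum_sub_distrib]; congr 1; ext; ring

lemma incrementSum_add (x y : ℕ → ℝ) :
    incrementSum k s K (x + y) = incrementSum k s K x + incrementSum k s K y := by
  simp only [incrementSum, Pi.add_apply, ← sum_add_distrib]; congr 1; ext; ring

lemma sq_incrementSum_le (x : ℕ → ℝ) :
    incrementSum k s K x ^ 2 ≤ 2 * K * ∑ i ∈ Ico s (s + K), (x (i + k) ^ 2 + x i ^ 2) := by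
  calc incrementSum k s K x ^ 2
      ≤ K * ∑ i ∈ Ico s (s + K), (x (i + k) - x i) ^ 2 := by
        simpa only [incrementSum, Nat.card_Ico, Nat.add_sub_cancel_left] using
          sq_sum_le_card_mul_sum_sq (s := Ico s (s + K)) (f := fun i => x (i + k) - x i)
    _ ≤ K * ∑ i ∈ Ico s (s + K), 2 * (x (i + k) ^ 2 + x i ^ 2) := by
        gcongr with i; nlinarith [sq_nonneg (x (i + k) + x i)]
    _ = _ := by rw [← mul_sum]; ring

lemma sq_incrementSum_truncate_le {M : ℝ} (hM : 0 ≤ M) (x : ℕ → ℝ) :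
    incrementSum k s K (truncate M ∘ x) ^ 2 ≤ 4 * K ^ 2 * M ^ 2 := by
  have hsq (i : ℕ) : truncate M (x i) ^ 2 ≤ M ^ 2 :=
    sq_le_sq.mpr ((abs_truncate_le hM _).trans (le_abs_self M))
  calc incrementSum k s K (truncate M ∘ x) ^ 2
      ≤ 2 * K * ∑ i ∈ Ico s (s + K), (truncate M (x (i + k)) ^ 2 + truncate M (x i) ^ 2) :=
        sq_incrementSum_le _
    _ ≤ 2 * K * ∑ i ∈ Ico s (s + K), (M ^ 2 + M ^ 2) :=
        mul_le_mul_of_nonneg_left (sum_le_sum fun i _ => add_le_add (hsq _) (hsq _))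
          (by positivity)
    _ = 4 * K ^ 2 * M ^ 2 := by
        rw [sum_const, Nat.card_Ico, Nat.add_sub_cancel_left, nsmul_eq_mul]; ring

lemma abs_sq_incrementSum_sub_sq_truncate_le {M : ℝ} (hM : 0 < M) (q : ℕ) (x : ℕ → ℝ) :
    |incrementSum k s K x ^ 2 - incrementSum k s K (truncate M ∘ x) ^ 2|
      ≤ K / M ^ q * ∑ i ∈ Ico s (s + K),
        (|x (i + k)| ^ (2 * q + 2) + |x i| ^ (2 * q + 2) + 4 * (x (i + k) ^ 2 + x i ^ 2)) := by
  set y := truncate M ∘ x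
  have hdiff : incrementSum k s K (x - y) ^ 2 ≤ (2 * K * ∑ i ∈ Ico s (s + K),
      (|x (i + k)| ^ (2 * q + 2) + |x i| ^ (2 * q + 2))) / (M ^ q) ^ 2 := by
    refine (sq_incrementSum_le _).trans ?_
    rw [mul_div_assoc, sum_div]
    gcongr with i
    simp only [add_div]
    gcongr <;> exact sq_sub_truncate_le hM q _
  have hsum : incrementSum k s K (x + y) ^ 2
      ≤ 2 * K * ∑ i ∈ Ico s (s + K), 4 * (x (i + k) ^ 2 + x i ^ 2) := by
    refine (sq_incrementSum_le _).trans ?_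
    gcongr with i
    rw [mul_add]
    exact add_le_add (sq_add_truncate_le hM.le _) (sq_add_truncate_le hM.le _)
  calc |incrementSum k s K x ^ 2 - incrementSum k s K y ^ 2|
      = |incrementSum k s K (x - y) * incrementSum k s K (x + y)| := by
        rw [incrementSum_sub, incrementSum_add]; ring_nf
    _ ≤ _ := abs_mul_le_of_sq_le (by positivity) hdiff hsum
    _ = _ := by
        rw [mul_sum, mul_sum, mul_sum, ← sum_add_distrib, sum_div]
        exact sum_congr rfl fun i _ => by field_simp

end IncrementSum

section Stationarity

variable {α : Type*} {U : ℕ → α → ℝ}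

lemma identDistrib_of_stationary [MeasurableSpace α] {μ : Measure α}
    (hMeas : ∀ i, Measurable (U i))
    (hStat : ∀ k n : ℕ,
      Measure.map (fun ω => fun i : Fin (n + 1) => U (k + i) ω) μ
        = Measure.map (fun ω => fun i : Fin (n + 1) => U i ω) μ) (j : ℕ) :
    IdentDistrib (U j) (U 0) μ μ where
  aemeasurable_fst := (hMeas j).aemeasurable
  aemeasurable_snd := (hMeas 0).aemeasurable
  map_eq := by
    have h := congrArg (Measure.map fun v : Fin 1 → ℝ => v 0) (hStat j 0)
    rwa [Measure.map_map (measurable_pi_apply 0) (measurable_pi_lambda _ fun _ => hMeas _),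
      Measure.map_map (measurable_pi_apply 0) (measurable_pi_lambda _ fun _ => hMeas _)] at h

lemma pastSigma_le {mα : MeasurableSpace α} (hMeas : ∀ i, Measurable (U i)) (k : ℕ) :
    pastSigma U k ≤ mα :=
  iSup_le fun _ => (hMeas _).comap_le

lemma futureSigma_le {mα : MeasurableSpace α} (hMeas : ∀ i, Measurable (U i)) (m : ℕ) :
    futureSigma U m ≤ mα :=
  iSup_le fun _ => (hMeas _).comap_le

lemma measurable_futureSigma {m j : ℕ} (hj : m ≤ j) : Measurable[futureSigma U m] (U j) := by
  obtain ⟨i, rfl⟩ := Nat.exists_eq_add_of_le hj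
  exact measurable_iff_comap_le.mpr
    (le_iSup (fun i => MeasurableSpace.comap (U (m + i)) inferInstance) i)

lemma measurable_incrementSum_futureSigma {φ : ℝ → ℝ} (hφ : Measurable φ) {m k s : ℕ}
    (hs : m ≤ s) (K : ℕ) :
    Measurable[futureSigma U m] fun ω => incrementSum k s K fun i => φ (U i ω) :=
  Finset.measurable_sum _ fun i hi =>
    (hφ.comp (measurable_futureSigma (by linarith [(mem_Ico.mp hi).1]))).sub
      (hφ.comp (measurable_futureSigma (by linarith [(mem_Ico.mp hi).1])))

end Stationarity

section Moments

variable {α : Type*} [MeasurableSpace α] {μ : Measure α} {U : ℕ → α → ℝ}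

lemma integrable_sq_incrementSum (hid : ∀ j, IdentDistrib (U j) (U 0) μ μ)
    (h2 : Integrable (fun ω => U 0 ω ^ 2) μ) (k s K : ℕ) :
    Integrable (fun ω => incrementSum k s K (fun i => U i ω) ^ 2) μ := by
  have hL2 : ∀ j, MemLp (U j) 2 μ := fun j => (hid j).memLp_iff.mpr
    ((memLp_two_iff_integrable_sq (hid 0).aemeasurable_fst.aestronglyMeasurable).mpr h2)
  exact (memLp_finsetSum _ fun i _ => (hL2 _).sub (hL2 _)).integrable_sq

lemma integral_abs_sq_incrementSum_sub_sq_truncate_le [IsProbabilityMeasure μ]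
    (hid : ∀ j, IdentDistrib (U j) (U 0) μ μ) {q : ℕ}
    (hq : Integrable (fun ω => |U 0 ω| ^ (2 * q + 2)) μ)
    (h2 : Integrable (fun ω => U 0 ω ^ 2) μ) {M : ℝ} (hM : 0 < M) (k s K : ℕ) :
    ∫ ω, |incrementSum k s K (fun i => U i ω) ^ 2
        - incrementSum k s K (fun i => truncate M (U i ω)) ^ 2| ∂μ
      ≤ K ^ 2 / M ^ q * (2 * ∫ ω, |U 0 ω| ^ (2 * q + 2) ∂μ + 8 * ∫ ω, U 0 ω ^ 2 ∂μ) := by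
  have hmom : ∀ {φ : ℝ → ℝ}, Measurable φ → Integrable (fun ω => φ (U 0 ω)) μ →
      ∀ j, Integrable (fun ω => φ (U j ω)) μ ∧ ∫ ω, φ (U j ω) ∂μ = ∫ ω, φ (U 0 ω) ∂μ :=
    fun hφ h j => ⟨((hid j).comp hφ).integrable_iff.mpr h, ((hid j).comp hφ).integral_eq⟩
  have hqi j := (hmom (φ := fun x => |x| ^ (2 * q + 2)) (by fun_prop) hq j).1
  have hqe j := (hmom (φ := fun x => |x| ^ (2 * q + 2)) (by fun_prop) hq j).2
  have h2i j := (hmom (φ := fun x => x ^ 2) (by fun_prop) h2 j).1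
  have h2e j := (hmom (φ := fun x => x ^ 2) (by fun_prop) h2 j).2
  have hterm : ∀ i, Integrable (fun ω => |U (i + k) ω| ^ (2 * q + 2) + |U i ω| ^ (2 * q + 2)
      + 4 * (U (i + k) ω ^ 2 + U i ω ^ 2)) μ :=
    fun i => ((hqi _).add (hqi _)).add (((h2i _).add (h2i _)).const_mul 4)
  calc _ ≤ ∫ ω, K / M ^ q * ∑ i ∈ Ico s (s + K), (|U (i + k) ω| ^ (2 * q + 2)
          + |U i ω| ^ (2 * q + 2) + 4 * (U (i + k) ω ^ 2 + U i ω ^ 2)) ∂μ :=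
        integral_mono_of_nonneg (ae_of_all _ fun _ => abs_nonneg _)
          ((integrable_finsetSum _ fun i _ => hterm i).const_mul _)
          (ae_of_all _ fun ω =>
            abs_sq_incrementSum_sub_sq_truncate_le (k := k) (s := s) (K := K) hM q (U · ω))
    _ = K / M ^ q * ∑ i ∈ Ico s (s + K), (2 * ∫ ω, |U 0 ω| ^ (2 * q + 2) ∂μ
          + 8 * ∫ ω, U 0 ω ^ 2 ∂μ) := by
        rw [integral_const_mul, integral_finsetSum _ fun i _ => hterm i]
        congr 1
        refine sum_congr rfl fun i _ => ?_
        rw [integral_add, integral_add (hqi _) (hqi _), integral_const_mul,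
          integral_add (h2i _) (h2i _), hqe (i + k), hqe i, h2e (i + k), h2e i]
        · ring
        exacts [(hqi _).add (hqi _), ((h2i _).add (h2i _)).const_mul 4]
    _ = _ := by rw [sum_const, Nat.card_Ico, Nat.add_sub_cancel_left, nsmul_eq_mul]; ring

end Moments

lemma sq_rpow_half_sub_mul_rpow_neg {r : ℝ} (hr : 0 < r) (v w : ℝ) :
    (r ^ ((v - w) / 2)) ^ 2 * r ^ (-v) = r ^ (-w) := by
  rw [← Real.rpow_natCast, ← Real.rpow_mul hr.le, ← Real.rpow_add hr]
  congr 1; push_cast; ring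

lemma inv_pow_rpow_le_rpow_neg {r t w : ℝ} (hr : 1 ≤ r) {q : ℕ} (hq : w ≤ q * t) :
    ((r ^ t) ^ q)⁻¹ ≤ r ^ (-w) := by
  rw [← Real.rpow_natCast, ← Real.rpow_mul (by linarith), ← Real.rpow_neg (by linarith)]
  exact Real.rpow_le_rpow_of_exponent_le hr (by linarith)

theorem condexp_square_sum_decay_general
    {Ω : Type*} [MeasureSpace Ω] [IsProbabilityMeasure (ℙ : Measure Ω)]
    (U : ℕ → Ω → ℝ)
    (hMeas : ∀ i, Measurable (U i))
    (hStat : ∀ k n : ℕ,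
      Measure.map (fun ω => fun i : Fin (n + 1) => U (k + i) ω) ℙ
        = Measure.map (fun ω => fun i : Fin (n + 1) => U i ω) ℙ)
    (hMom : ∀ p : ℕ, 1 ≤ p → Integrable (fun ω => |U 0 ω| ^ p) ℙ)
    (C v : ℝ) (hC : 0 < C)
    (hMix : ∀ k h : ℕ, 1 ≤ h → ∀ A B : Set Ω,
      MeasurableSet[pastSigma U k] A → MeasurableSet[futureSigma U (k + h)] B →
      |(ℙ (A ∩ B)).toReal - (ℙ A).toReal * (ℙ B).toReal| ≤ C * (h : ℝ) ^ (-v)) :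
    ∀ w : ℝ, 0 < w → w < v → ∃ Cw > (0 : ℝ),
      ∀ κ r K k s : ℕ, 1 ≤ r → 1 ≤ K → 1 ≤ k → κ + r ≤ s →
      ∫ ω, |(ℙ[fun ω' => (∑ i ∈ Finset.Ico s (s + K), (U (i + k) ω' - U i ω')) ^ 2
              | pastSigma U κ]) ω
          - ∫ ω', (∑ i ∈ Finset.Ico s (s + K), (U (i + k) ω' - U i ω')) ^ 2 ∂ℙ| ∂ℙ
        ≤ Cw * (K : ℝ) ^ 2 * (r : ℝ) ^ (-w) := by
  intro w _ hwv
  have hid := identDistrib_of_stationary hMeas hStat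
  have h2 : Integrable (fun ω => U 0 ω ^ 2) ℙ := by simpa using hMom 2 (by norm_num)
  obtain ⟨q, hq⟩ : ∃ q : ℕ, w ≤ q * ((v - w) / 2) :=
    ⟨_, (div_le_iff₀ (half_pos (sub_pos.mpr hwv))).mp (Nat.le_ceil _)⟩
  set Cq := ∫ ω, |U 0 ω| ^ (2 * q + 2)
  set E2 := ∫ ω, U 0 ω ^ 2
  have hCq : 0 ≤ Cq := integral_nonneg fun _ => by positivity
  have hE2 : 0 ≤ E2 := integral_nonneg fun _ => by positivity
  refine ⟨16 * C + 4 * Cq + 16 * E2, by positivity, fun κ r K k s hr _ _ hs => ?_⟩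
  -- at this truncation level the mixing term `M² r^(-v)` is exactly `r^(-w)`
  set M := (r : ℝ) ^ ((v - w) / 2) with hMdef
  have hM : 0 < M := by positivity
  set g := fun ω => incrementSum k s K (fun i => truncate M (U i ω)) ^ 2
  have hgm : StronglyMeasurable[futureSigma U (κ + r)] g :=
    ((measurable_incrementSum_futureSigma measurable_truncate (by omega) K).pow_const
      2).stronglyMeasurable
  have hgB (ω : Ω) : |g ω| ≤ 4 * K ^ 2 * M ^ 2 :=
    (abs_of_nonneg (sq_nonneg _)).trans_le (sq_incrementSum_truncate_le hM.le _)
  have hmix := integral_abs_condExp_sub_le_of_mixing (pastSigma_le hMeas κ)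
    (futureSigma_le hMeas (κ + r)) (hMix κ r hr) hgm hgB
  have htr := integral_abs_sq_incrementSum_sub_sq_truncate_le hid (hMom (2 * q + 2) (by omega))
    h2 hM k s K
  have htail := mul_le_mul_of_nonneg_left (inv_pow_rpow_le_rpow_neg (r := r)
    (by exact_mod_cast hr) hq) (by positivity : 0 ≤ (4 * Cq + 16 * E2) * K ^ 2)
  calc _ ≤ _ + 2 * _ := integral_abs_condExp_sub_le_add (integrable_sq_incrementSum hid h2 k s K)
        (Integrable.of_bound (hgm.mono (futureSigma_le hMeas _)).aestronglyMeasurable _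
          (ae_of_all _ hgB))
    _ ≤ 4 * (4 * K ^ 2 * M ^ 2) * (C * r ^ (-v)) + 2 * (K ^ 2 / M ^ q * (2 * Cq + 8 * E2)) :=
        add_le_add hmix (mul_le_mul_of_nonneg_left htr zero_le_two)
    _ = 16 * C * K ^ 2 * (M ^ 2 * r ^ (-v)) + (4 * Cq + 16 * E2) * K ^ 2 * (M ^ q)⁻¹ := by
        ring
    _ ≤ (16 * C + 4 * Cq + 16 * E2) * K ^ 2 * r ^ (-w) := by
        rw [hMdef, sq_rpow_half_sub_mul_rpow_neg (by positivity)]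
        linarith

/-- for `0 < w < v` there is `C_w > 0` so that for all
`κ ≥ 0`, `r, K, k ≥ 1` and `s ≥ κ + r`, writing `S := Σ_{i=s}^{s+K−1} (U_{i+k} − U_i)`,
`E[|E[S²|𝓕_κ] − E[S²]|] ≤ C_w K² r^{−w}`. -/
theorem condexp_square_sum_decay
    {Ω : Type*} [MeasureSpace Ω] [IsProbabilityMeasure (ℙ : Measure Ω)]
    (U : ℕ → Ω → ℝ)
    (hMeas : ∀ i, Measurable (U i))
    (hStat : ∀ k n : ℕ,
      Measure.map (fun ω => fun i : Fin (n + 1) => U (k + i) ω) ℙ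
        = Measure.map (fun ω => fun i : Fin (n + 1) => U i ω) ℙ)
    (hSymm : Measure.map (U 0) ℙ = Measure.map (fun ω => -U 0 ω) ℙ)
    (hMom : ∀ p : ℕ, 1 ≤ p → Integrable (fun ω => |U 0 ω| ^ p) ℙ)
    (C v : ℝ) (hC : 0 < C)
    (hMix : ∀ k h : ℕ, 1 ≤ h → ∀ A B : Set Ω,
      MeasurableSet[pastSigma U k] A → MeasurableSet[futureSigma U (k + h)] B →
      |(ℙ (A ∩ B)).toReal - (ℙ A).toReal * (ℙ B).toReal| ≤ C * (h : ℝ) ^ (-v))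
    (hv : 0 < v) :
    ∀ w : ℝ, 0 < w → w < v → ∃ Cw > (0 : ℝ),
      ∀ κ r K k s : ℕ, 1 ≤ r → 1 ≤ K → 1 ≤ k → κ + r ≤ s →
      ∫ ω, |(ℙ[fun ω' => (∑ i ∈ Finset.Ico s (s + K), (U (i + k) ω' - U i ω')) ^ 2
              | pastSigma U κ]) ω
          - ∫ ω', (∑ i ∈ Finset.Ico s (s + K), (U (i + k) ω' - U i ω')) ^ 2 ∂ℙ| ∂ℙ
        ≤ Cw * (K : ℝ) ^ 2 * (r : ℝ) ^ (-w) :=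
  condexp_square_sum_decay_general U hMeas hStat hMom C v hC hMix

end DepNoise
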